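/- The vectors of norm 2 in the dual lattice of A_4^∨(5) fall into exactly 24 classes modulo A_4^∨, each class containing exactly 5 such vectors: for every a ∈ A_4 with ⟨a,a⟩ = 10, the set {b ∈ A_4 : ⟨b,b⟩ = 10 and (a − b)/5 ∈ A_4^∨} has exactly 5 elements, and the image of {a ∈ A_4 : ⟨a,a⟩ = 10} in D under a ↦ a/5 + A_4^∨ has exactly 24 elements. -/

import Mathlib

open scoped BigOperators

noncomputable section

/-- The standard bilinear form `⟨x,y⟩ = ∑ xᵢ yᵢ` on `ℚ^5`. -/
def form (x y : Fin 5 → ℚ) : ℚ := ∑ i, x i * y i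

/-- The root lattice `A₄ = {a ∈ ℤ^5 : a₁ + ⋯ + a₅ = 0}` inside `ℚ^5`. -/
def A4 : AddSubgroup (Fin 5 → ℚ) where
  carrier := {a | (∀ i, ∃ n : ℤ, a i = (n : ℚ)) ∧ ∑ i, a i = 0}
  zero_mem' := ⟨fun _ => ⟨0, by simp⟩, by simp⟩
  add_mem' := by
    rintro a b ⟨ha, ha0⟩ ⟨hb, hb0⟩
    constructor
    · intro i
      obtain ⟨n, hn⟩ := ha i
      obtain ⟨m, hm⟩ := hb i
      exact ⟨n + m, by push_cast [Pi.add_apply, hn, hm]; ring⟩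
    · simp [Pi.add_apply, Finset.sum_add_distrib, ha0, hb0]
  neg_mem' := by
    rintro a ⟨ha, ha0⟩
    constructor
    · intro i
      obtain ⟨n, hn⟩ := ha i
      exact ⟨-n, by push_cast [Pi.neg_apply, hn]; ring⟩
    · simp [Pi.neg_apply, Finset.sum_neg_distrib, ha0]

/-- The fundamental weight `w₁ = (4,-1,-1,-1,-1)/5` of `A₄`. -/
def w1 : Fin 5 → ℚ := ![4/5, -1/5, -1/5, -1/5, -1/5]
/-- The fundamental weight `w₂ = (3,3,-2,-2,-2)/5` of `A₄`. -/
def w2 : Fin 5 → ℚ := ![3/5, 3/5, -2/5, -2/5, -2/5]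
/-- The fundamental weight `w₃ = (2,2,2,-3,-3)/5` of `A₄`. -/
def w3 : Fin 5 → ℚ := ![2/5, 2/5, 2/5, -3/5, -3/5]
/-- The fundamental weight `w₄ = (1,1,1,1,-4)/5` of `A₄`. -/
def w4 : Fin 5 → ℚ := ![1/5, 1/5, 1/5, 1/5, -4/5]

/-- The weight lattice `A₄^∨ = ℤw₁ + ℤw₂ + ℤw₃ + ℤw₄`.  The rescaled lattice `A₄^∨(5)`
is this group equipped with the bilinear form `5⟨·,·⟩`. -/
def A4dual : AddSubgroup (Fin 5 → ℚ) := AddSubgroup.closure {w1, w2, w3, w4}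

/-- The dual lattice `(1/5)A₄ = {a/5 : a ∈ A₄}` of `A₄^∨(5)`. -/
def fifthA4 : AddSubgroup (Fin 5 → ℚ) :=
  A4.map (DistribMulAction.toAddMonoidHom (Fin 5 → ℚ) ((5 : ℚ)⁻¹))

/-- The hyperplane `V = {x ∈ ℚ^5 : x₁ + ⋯ + x₅ = 0}`. -/
def V0 : Submodule ℚ (Fin 5 → ℚ) where
  carrier := {x | ∑ i, x i = 0}
  zero_mem' := by simp
  add_mem' := by
    intro a b ha hb
    simp only [Set.mem_setOf_eq] at *
    simp [Pi.add_apply, Finset.sum_add_distrib, ha, hb]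
  smul_mem' := by
    intro c a ha
    simp only [Set.mem_setOf_eq] at *
    simp [Pi.smul_apply, ← Finset.mul_sum, ha]

/-- The discriminant group `D = ((1/5)A₄)/A₄^∨` of the lattice `A₄^∨(5)`. -/
abbrev Disc := fifthA4 ⧸ (A4dual.addSubgroupOf fifthA4)

/-!
An integer vector with sum `0` and sum of squares `10` has as entries a permutation of
`-2, …, 2` (a finite check), so the vectors `a ∈ A₄` with `⟨a,a⟩ = 10` are exactly the
`normTenVec σ`: the bijections `σ : Fin 5 ≃ ZMod 5` read through the representatives `-2, …, 2`.
Since `A₄^∨ = {x ∈ V : xᵢ - x₀ ∈ ℤ}`, two of them are congruent, `(a - b)/5 ∈ A₄^∨`, iff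
`a - b` is constant mod `5`, i.e. iff their bijections differ by a translation of `ZMod 5`.
Translations act freely, so every class has `5` elements and there are `120 / 5 = 24` classes.
-/

open Finset

lemma Finset.mul_card_image_eq_card {α β : Type*} [DecidableEq β] {s : Finset α} {f : α → β}
    {n : ℕ} (h : ∀ a ∈ s, #{b ∈ s | f b = f a} = n) : n * #(s.image f) = #s := by
  have hfiber : ∀ y ∈ s.image f, #{b ∈ s | f b = y} = n := by
    simp only [mem_image]
    rintro _ ⟨a, ha, rfl⟩
    exact h a ha
  exact le_antisymm (mul_card_image_le_card s n fun y hy => (hfiber y hy).ge)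
    (card_le_mul_card_image s n fun y hy => (hfiber y hy).le)

lemma exists_intCast_eq_div_iff_intCast_zmod_eq_zero {K : Type*} [Field K] [CharZero K] {m : ℤ}
    {n : ℕ} (hn : n ≠ 0) : (∃ k : ℤ, (m : K) / n = k) ↔ (m : ZMod n) = 0 := by
  have hn' : (n : K) ≠ 0 := by exact_mod_cast hn
  rw [ZMod.intCast_zmod_eq_zero_iff_dvd]
  constructor
  · rintro ⟨k, hk⟩
    rw [div_eq_iff hn'] at hk
    exact ⟨k, by exact_mod_cast hk.trans (mul_comm _ _)⟩
  · rintro ⟨k, rfl⟩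
    exact ⟨k, by push_cast; field_simp⟩

lemma mem_Icc_of_sum_sq_eq_ten {ι : Type*} [Fintype ι] {f : ι → ℤ} (h : ∑ i, f i ^ 2 = 10)
    (i : ι) : f i ∈ Icc (-3) 3 := by
  have : f i ^ 2 ≤ 10 := h ▸ single_le_sum (fun j _ => sq_nonneg (f j)) (mem_univ i)
  rw [mem_Icc]
  constructor <;> nlinarith

lemma mem_Icc_and_injective_of_sum_sq_eq_ten {f : Fin 5 → ℤ} (h0 : ∑ i, f i = 0)
    (h10 : ∑ i, f i ^ 2 = 10) : (∀ i, f i ∈ Icc (-2) 2) ∧ Function.Injective f := by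
  have check : ∀ a ∈ Icc (-3 : ℤ) 3, ∀ b ∈ Icc (-3 : ℤ) 3, ∀ c ∈ Icc (-3 : ℤ) 3,
      ∀ d ∈ Icc (-3 : ℤ) 3, a ^ 2 + b ^ 2 + c ^ 2 + d ^ 2 + (a + b + c + d) ^ 2 = 10 →
        (∀ i, (![a, b, c, d, -(a + b + c + d)] : Fin 5 → ℤ) i ∈ Icc (-2) 2) ∧
          Function.Injective (![a, b, c, d, -(a + b + c + d)] : Fin 5 → ℤ) := by
    decide
  have hIcc := mem_Icc_of_sum_sq_eq_ten h10
  rw [Fin.sum_univ_five] at h0 h10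
  have hf : f = ![f 0, f 1, f 2, f 3, -(f 0 + f 1 + f 2 + f 3)] := by
    ext i
    fin_cases i <;> simp
    linarith
  rw [hf]
  refine check _ (hIcc 0) _ (hIcc 1) _ (hIcc 2) _ (hIcc 3) ?_
  rw [show f 4 = -(f 0 + f 1 + f 2 + f 3) by linarith] at h10
  linear_combination h10

lemma exists_equiv_valMinAbs_eq {f : Fin 5 → ℤ} (h0 : ∑ i, f i = 0) (h10 : ∑ i, f i ^ 2 = 10) :
    ∃ σ : Fin 5 ≃ ZMod 5, ∀ i, (σ i).valMinAbs = f i := by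
  obtain ⟨hIcc, hinj⟩ := mem_Icc_and_injective_of_sum_sq_eq_ten h0 h10
  have hval (i : Fin 5) : (f i : ZMod 5).valMinAbs = f i := by
    have := mem_Icc.1 (hIcc i)
    exact (ZMod.valMinAbs_spec _ _).2 ⟨rfl, by push_cast; constructor <;> omega⟩
  have hσ : Function.Injective fun i => (f i : ZMod 5) := fun i j h =>
    hinj (by rw [← hval i, ← hval j]; exact congrArg ZMod.valMinAbs h)
  exact ⟨.ofBijective _ ((Fintype.bijective_iff_injective_and_card _).2 ⟨hσ, rfl⟩), hval⟩

lemma sum_valMinAbs (σ : Fin 5 ≃ ZMod 5) : ∑ i, (σ i).valMinAbs = 0 := by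
  rw [σ.sum_comp (fun x => x.valMinAbs)]
  decide

lemma sum_valMinAbs_sq (σ : Fin 5 ≃ ZMod 5) : ∑ i, (σ i).valMinAbs ^ 2 = 10 := by
  rw [σ.sum_comp (fun x => x.valMinAbs ^ 2)]
  decide

lemma mem_A4_iff {a : Fin 5 → ℚ} :
    a ∈ A4 ↔ ∃ f : Fin 5 → ℤ, ∑ i, f i = 0 ∧ a = fun i => (f i : ℚ) := by
  constructor
  · rintro ⟨hint, hsum⟩
    choose f hf using hint
    refine ⟨f, ?_, funext hf⟩
    exact_mod_cast (show ∑ i, (f i : ℚ) = 0 by simpa only [hf] using hsum)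
  · rintro ⟨f, hf, rfl⟩
    exact ⟨fun i => ⟨f i, rfl⟩, show ∑ i, (f i : ℚ) = 0 by exact_mod_cast hf⟩

lemma form_intCast_self (f : Fin 5 → ℤ) :
    form (fun i => (f i : ℚ)) (fun i => (f i : ℚ)) = ((∑ i, f i ^ 2 : ℤ) : ℚ) := by
  simp [form, sq]

def normTenVec (σ : Fin 5 ≃ ZMod 5) : Fin 5 → ℚ := fun i => ((σ i).valMinAbs : ℚ)

lemma sum_normTenVec (σ : Fin 5 ≃ ZMod 5) : ∑ i, normTenVec σ i = 0 := by
  simp only [normTenVec]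
  exact_mod_cast sum_valMinAbs σ

lemma normTenVec_injective : Function.Injective normTenVec := fun _ _ h =>
  Equiv.ext fun i => ZMod.valMinAbs_inj.1 (Int.cast_inj.1 (congrFun h i))

lemma mem_A4_and_form_eq_ten_iff {a : Fin 5 → ℚ} :
    a ∈ A4 ∧ form a a = 10 ↔ ∃ σ, a = normTenVec σ := by
  constructor
  · rintro ⟨ha, h10⟩
    obtain ⟨f, hf, rfl⟩ := mem_A4_iff.1 ha
    rw [form_intCast_self] at h10
    obtain ⟨σ, hσ⟩ := exists_equiv_valMinAbs_eq hf (by exact_mod_cast h10)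
    exact ⟨σ, funext fun i => by simp [normTenVec, hσ]⟩
  · rintro ⟨σ, rfl⟩
    refine ⟨mem_A4_iff.2 ⟨_, sum_valMinAbs σ, rfl⟩, ?_⟩
    unfold normTenVec
    rw [form_intCast_self, sum_valMinAbs_sq]
    norm_num

def normTenVecs : Finset (Fin 5 → ℚ) := univ.image normTenVec

lemma mem_normTenVecs {a : Fin 5 → ℚ} : a ∈ normTenVecs ↔ a ∈ A4 ∧ form a a = 10 := by
  simp [normTenVecs, mem_A4_and_form_eq_ten_iff, eq_comm]

lemma card_normTenVecs : #normTenVecs = 120 := by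
  rw [normTenVecs, card_image_of_injective _ normTenVec_injective, card_univ,
    Fintype.card_equiv (ZMod.finEquiv 5).toEquiv]
  rfl

lemma A4dual_le_V0 : A4dual ≤ V0.toAddSubgroup := by
  rw [A4dual, AddSubgroup.closure_le]
  rintro _ (rfl | rfl | rfl | rfl) <;> simp [V0, Fin.sum_univ_five, w1, w2, w3, w4] <;> norm_num

lemma exists_intCast_eq_sub_of_mem_A4dual {x : Fin 5 → ℚ} (hx : x ∈ A4dual) (i : Fin 5) :
    ∃ n : ℤ, x i - x 0 = n := by
  induction hx using AddSubgroup.closure_induction with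
  | mem w hw =>
    -- the entries of `wₖ` are `wₖ 0` and `wₖ 0 - 1`
    rcases hw with rfl | rfl | rfl | rfl <;> fin_cases i <;> norm_num [w1, w2, w3, w4]
      <;> first | exact ⟨0, Int.cast_zero.symm⟩ | exact ⟨-1, by simp⟩
  | zero => exact ⟨0, by simp⟩
  | add x y _ _ hx hy =>
    obtain ⟨m, hm⟩ := hx
    obtain ⟨n, hn⟩ := hy
    exact ⟨m + n, by push_cast; simp only [Pi.add_apply]; linarith⟩
  | neg x _ hx =>
    obtain ⟨n, hn⟩ := hx
    exact ⟨-n, by push_cast; simp only [Pi.neg_apply]; linarith⟩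

lemma single_sub_mem_A4dual (i : Fin 5) : Pi.single i 1 - (fun _ => (5 : ℚ)⁻¹) ∈ A4dual := by
  obtain ⟨h1, h2, h3, h4⟩ : w1 ∈ A4dual ∧ w2 ∈ A4dual ∧ w3 ∈ A4dual ∧ w4 ∈ A4dual := by
    refine ⟨?_, ?_, ?_, ?_⟩ <;> exact AddSubgroup.subset_closure (by simp)
  have : Pi.single i 1 - (fun _ => (5 : ℚ)⁻¹) = ![w1, w2 - w1, w3 - w2, w4 - w3, -w4] i := by
    fin_cases i <;> ext j <;> fin_cases j <;> norm_num [w1, w2, w3, w4]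
  rw [this]
  fin_cases i <;> simp [sub_mem, *]

lemma mem_A4dual_iff {x : Fin 5 → ℚ} :
    x ∈ A4dual ↔ ∑ i, x i = 0 ∧ ∀ i, ∃ n : ℤ, x i - x 0 = n := by
  refine ⟨fun hx => ⟨A4dual_le_V0 hx, exists_intCast_eq_sub_of_mem_A4dual hx⟩, ?_⟩
  rintro ⟨hsum, hint⟩
  choose n hn using hint
  have hx : x = ∑ i, n i • (Pi.single i 1 - fun _ => (5 : ℚ)⁻¹) := by
    ext j
    have hn_sum : ∑ i, (n i : ℚ) = -5 * x 0 := by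
      simp only [← hn, sum_sub_distrib, hsum, sum_const, card_univ, Fintype.card_fin]
      ring
    simp [Finset.sum_apply, Pi.single_apply, zsmul_eq_mul, mul_sub, sum_sub_distrib, ← sum_mul,
      hn_sum]
    linarith [hn j]
  rw [hx]
  exact sum_mem fun i _ => zsmul_mem (single_sub_mem_A4dual i) _

lemma mk_smul_eq_mk_smul_iff {a b : Fin 5 → ℚ} :
    (QuotientAddGroup.mk ((5 : ℚ)⁻¹ • b) : (Fin 5 → ℚ) ⧸ A4dual) =
        QuotientAddGroup.mk ((5 : ℚ)⁻¹ • a) ↔ (5 : ℚ)⁻¹ • (a - b) ∈ A4dual := by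
  rw [QuotientAddGroup.eq, neg_add_eq_sub, smul_sub]

lemma smul_sub_normTenVec_mem_A4dual_iff (σ τ : Fin 5 ≃ ZMod 5) :
    (5 : ℚ)⁻¹ • (normTenVec σ - normTenVec τ) ∈ A4dual ↔ ∃ c : ZMod 5, ∀ i, τ i = σ i + c := by
  set x := (5 : ℚ)⁻¹ • (normTenVec σ - normTenVec τ)
  have hsum : ∑ i, x i = 0 := by
    simp [x, ← mul_sum, sum_sub_distrib, sum_normTenVec]
  have hdiff (i : Fin 5) : x i - x 0 = (((σ i).valMinAbs - (τ i).valMinAbs -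
      ((σ 0).valMinAbs - (τ 0).valMinAbs) : ℤ) : ℚ) / (5 : ℕ) := by
    simp [x, normTenVec]
    ring
  simp only [mem_A4dual_iff, hsum, true_and, hdiff,
    exists_intCast_eq_div_iff_intCast_zmod_eq_zero (by norm_num : (5 : ℕ) ≠ 0)]
  push_cast [ZMod.coe_valMinAbs]
  constructor
  · intro h
    exact ⟨τ 0 - σ 0, fun i => by linear_combination -(h i)⟩
  · rintro ⟨c, hc⟩ i
    rw [hc, hc]
    ring

lemma setOf_smul_sub_mem_A4dual_eq_range (σ : Fin 5 ≃ ZMod 5) :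
    {b | b ∈ A4 ∧ form b b = 10 ∧ (5 : ℚ)⁻¹ • (normTenVec σ - b) ∈ A4dual} =
      Set.range fun c : ZMod 5 => normTenVec (σ.trans (Equiv.addRight c)) := by
  ext b
  simp only [Set.mem_setOf_eq, Set.mem_range, ← and_assoc, mem_A4_and_form_eq_ten_iff]
  constructor
  · rintro ⟨⟨τ, rfl⟩, h⟩
    obtain ⟨c, hc⟩ := (smul_sub_normTenVec_mem_A4dual_iff σ τ).1 h
    exact ⟨c, congrArg normTenVec (Equiv.ext fun i => (hc i).symm)⟩
  · rintro ⟨c, rfl⟩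
    exact ⟨⟨_, rfl⟩, (smul_sub_normTenVec_mem_A4dual_iff _ _).2 ⟨c, fun i => rfl⟩⟩

lemma ncard_setOf_smul_sub_mem_A4dual {a : Fin 5 → ℚ} (ha : a ∈ A4) (h10 : form a a = 10) :
    Set.ncard {b | b ∈ A4 ∧ form b b = 10 ∧ (5 : ℚ)⁻¹ • (a - b) ∈ A4dual} = 5 := by
  obtain ⟨σ, rfl⟩ := mem_A4_and_form_eq_ten_iff.1 ⟨ha, h10⟩
  rw [setOf_smul_sub_mem_A4dual_eq_range, Set.ncard_range_of_injective, Nat.card_zmod]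
  intro c d h
  simpa using congrArg (· 0) (normTenVec_injective h)

/-- The vectors of norm `2` in the dual lattice of `A₄^∨(5)` fall
into exactly `24` classes modulo `A₄^∨`, each class containing exactly `5` such
vectors. -/
theorem norm_two_classes :
    (∀ a : Fin 5 → ℚ, a ∈ A4 → form a a = 10 →
      Set.ncard {b : Fin 5 → ℚ | b ∈ A4 ∧ form b b = 10 ∧ (5 : ℚ)⁻¹ • (a - b) ∈ A4dual} = 5) ∧
    Set.ncard ((fun a : Fin 5 → ℚ =>
        (QuotientAddGroup.mk ((5 : ℚ)⁻¹ • a) : (Fin 5 → ℚ) ⧸ A4dual)) ''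
      {a | a ∈ A4 ∧ form a a = 10}) = 24 := by
  classical
  refine ⟨fun a => ncard_setOf_smul_sub_mem_A4dual, ?_⟩
  set F := fun a : Fin 5 → ℚ => (QuotientAddGroup.mk ((5 : ℚ)⁻¹ • a) : (Fin 5 → ℚ) ⧸ A4dual)
  have hfiber : ∀ a ∈ normTenVecs, #{b ∈ normTenVecs | F b = F a} = 5 := by
    intro a ha
    obtain ⟨ha4, h10⟩ := mem_normTenVecs.1 ha
    rw [← Set.ncard_coe_finset]
    convert ncard_setOf_smul_sub_mem_A4dual ha4 h10 using 2
    ext b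
    simp [F, mem_normTenVecs, mk_smul_eq_mk_smul_iff, and_assoc]
  have hclasses := Finset.mul_card_image_eq_card hfiber
  rw [card_normTenVecs] at hclasses
  rw [show {a | a ∈ A4 ∧ form a a = 10} = (normTenVecs : Set _) from
    Set.ext fun _ => mem_normTenVecs.symm, ← coe_image, Set.ncard_coe_finset]
  omega
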